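/- Fix c ∈ ℂⁿ and r ∈ ℝ, and define σ(z, w) = ((z + c w)/δ(z,w), w/δ(z,w)), where δ(z,w) = 1 − 2i⟨c̄, z⟩ + (r − i‖c‖²)w and ⟨a, b⟩ = Σⱼ aⱼ bⱼ. Then for every (z,w) ∈ ℂⁿ × ℂ with Im w = ‖z‖² and δ(z,w) ≠ 0, the image σ(z,w) = (z', w') again satisfies Im w' = ‖z'‖². -/

import Mathlib

/-- The denominator `δ(z,w) = 1 − 2i⟨c̄, z⟩ + (r − i‖c‖²)w`. -/
noncomputable def heisenbergDelta (n : ℕ) (c : Fin n → ℂ) (r : ℝ)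
    (z : Fin n → ℂ) (w : ℂ) : ℂ :=
  1 - 2 * Complex.I * (∑ j, (starRingEnd ℂ) (c j) * z j) +
    ((r : ℂ) - Complex.I * ((∑ j, ‖c j‖ ^ 2 : ℝ) : ℂ)) * w

/-!
With `ρ(z, w) = Im w - ‖z‖²`, expanding `w · conj δ` and `‖z + c w‖²` gives the identity
`Im (w · conj δ) - ‖z + c w‖² = ρ(z, w)`; dividing by `|δ|²` shows `ρ ∘ σ = ρ / |δ|²`,
so `σ` maps the hypersurface `ρ = 0` into itself.
-/

open Complex ComplexConjugate

lemma Complex.div_im_eq_im_mul_conj_div (a b : ℂ) : (a / b).im = (a * conj b).im / normSq b := by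
  rw [div_im, mul_im, conj_re, conj_im]
  ring

lemma Complex.sum_sq_norm_add_mul {ι : Type*} [Fintype ι] (z c : ι → ℂ) (w : ℂ) :
    ∑ j, ‖z j + c j * w‖ ^ 2 =
      ∑ j, ‖z j‖ ^ 2 + (∑ j, ‖c j‖ ^ 2) * normSq w +
        2 * ((∑ j, conj (c j) * z j) * conj w).re := by
  have hterm (j : ι) : ‖z j + c j * w‖ ^ 2 =
      ‖z j‖ ^ 2 + ‖c j‖ ^ 2 * normSq w + 2 * (conj (c j) * z j * conj w).re := by
    simp only [Complex.sq_norm]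
    rw [normSq_add, normSq_mul, map_mul, mul_left_comm (z j), ← mul_assoc]
  simp only [hterm, Finset.sum_add_distrib, ← Finset.sum_mul, ← Finset.mul_sum, ← re_sum]

theorem im_mul_conj_heisenbergDelta (n : ℕ) (c : Fin n → ℂ) (r : ℝ) (z : Fin n → ℂ) (w : ℂ) :
    (w * conj (heisenbergDelta n c r z w)).im =
      ∑ j, ‖z j + c j * w‖ ^ 2 + (w.im - ∑ j, ‖z j‖ ^ 2) := by
  set S := ∑ j, conj (c j) * z j
  set K := ∑ j, ‖c j‖ ^ 2
  have hδ : (w * conj (heisenbergDelta n c r z w)).im =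
      w.im + K * normSq w + 2 * (S * conj w).re := by
    simp only [heisenbergDelta, map_add, map_sub, map_mul, map_one, map_ofNat, conj_I, conj_ofReal,
      mul_re, mul_im, add_re, add_im, sub_re, sub_im, neg_re, neg_im, conj_re, conj_im, I_re, I_im,
      ofReal_re, ofReal_im, one_re, one_im, re_ofNat, im_ofNat, normSq_apply]
    ring
  rw [hδ, sum_sq_norm_add_mul]
  ring

theorem im_div_heisenbergDelta_sub_sum_sq_norm (n : ℕ) (c : Fin n → ℂ) (r : ℝ)
    (z : Fin n → ℂ) (w : ℂ) :
    (w / heisenbergDelta n c r z w).im -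
        ∑ j, ‖(z j + c j * w) / heisenbergDelta n c r z w‖ ^ 2 =
      (w.im - ∑ j, ‖z j‖ ^ 2) / normSq (heisenbergDelta n c r z w) := by
  simp only [div_im_eq_im_mul_conj_div, im_mul_conj_heisenbergDelta, norm_div, div_pow,
    Complex.sq_norm (heisenbergDelta ..), ← Finset.sum_div]
  ring

theorem fractional_isotropy_preserves_heisenberg_general (n : ℕ) (c : Fin n → ℂ) (r : ℝ)
    (z : Fin n → ℂ) (w : ℂ)
    (hM : w.im = ∑ j, ‖z j‖ ^ 2) :
    (w / heisenbergDelta n c r z w).im =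
      ∑ j, ‖(z j + c j * w) / heisenbergDelta n c r z w‖ ^ 2 := by
  rw [← sub_eq_zero, im_div_heisenbergDelta_sub_sum_sq_norm, hM, sub_self, zero_div]

theorem fractional_isotropy_preserves_heisenberg (n : ℕ) (c : Fin n → ℂ) (r : ℝ)
    (z : Fin n → ℂ) (w : ℂ)
    (hM : w.im = ∑ j, ‖z j‖ ^ 2)
    (hδ : heisenbergDelta n c r z w ≠ 0) :
    (w / heisenbergDelta n c r z w).im =
      ∑ j, ‖(z j + c j * w) / heisenbergDelta n c r z w‖ ^ 2 :=
  fractional_isotropy_preserves_heisenberg_general n c r z w hM
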